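/- Transfer coefficient bound in low-rank MDPs: Under the low-rank structure and offline-distribution assumptions below, for every policy π and every tuple f = (f_0,…,f_{H−1}) of functions f_h : S×A → ℝ (with the convention f_H ≡ 0) such that Σ_{h=0}^{H−1} Σ_{s,a} ν_h(s,a)·( (T_h f_{h+1})(s,a) − f_h(s,a) )² > 0, one has: Σ_{h=0}^{H−1} Σ_{s,a} d^π_h(s,a)·( (T_h f_{h+1})(s,a) − f_h(s,a) ) ≤ sqrt(α) · ( 1 + Σ_{h=1}^{H−1} Σ_{s,a} d^π_{h−1}(s,a)·sqrt( φ_{h−1}(s,a)ᵀ Σ_{ν_{h−1}}⁻¹ φ_{h−1}(s,a) ) ) · sqrt( Σ_{h=0}^{H−1} Σ_{s,a} ν_h(s,a)·( (T_h f_{h+1})(s,a) − f_h(s,a) )² ). -/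

import Mathlib

open Finset Matrix
open scoped Classical

/-- Max over the (finite, nonempty) action space. -/
noncomputable def supA {A : Type*} [Fintype A] [Nonempty A] (g : A → ℝ) : ℝ :=
  Finset.univ.sup' Finset.univ_nonempty g

/-- An action achieving the maximum of `g`. -/
noncomputable def argmaxA {A : Type*} [Fintype A] [Nonempty A] (g : A → ℝ) : A :=
  Classical.choose (Finset.exists_mem_eq_sup' (Finset.univ_nonempty (α := A)) g)

/-- Bellman optimality operator at step `h` applied to `g : S × A → ℝ`. -/
noncomputable def bellman {S A : Type*} [Fintype S] [Fintype A] [Nonempty A]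
    (P : ℕ → S → A → S → ℝ) (r : ℕ → S → A → ℝ) (h : ℕ)
    (g : S → A → ℝ) (s : S) (a : A) : ℝ :=
  r h s a + ∑ s', P h s a s' * supA (g s')

/-- Auxiliary value function, by recursion on the number of remaining steps. -/
noncomputable def Vaux {S A : Type*} [Fintype S] [Fintype A]
    (P : ℕ → S → A → S → ℝ) (r : ℕ → S → A → ℝ) (π : ℕ → S → A → ℝ) (H : ℕ) :
    ℕ → S → ℝ
  | 0, _ => 0
  | k + 1, s => ∑ a, π (H - (k + 1)) s a *
      (r (H - (k + 1)) s a + ∑ s', P (H - (k + 1)) s a s' * Vaux P r π H k s')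

/-- Value function `V^π_h(s)` of policy `π` (with `V^π_H ≡ 0`). -/
noncomputable def Vval {S A : Type*} [Fintype S] [Fintype A]
    (P : ℕ → S → A → S → ℝ) (r : ℕ → S → A → ℝ) (π : ℕ → S → A → ℝ)
    (H h : ℕ) (s : S) : ℝ :=
  Vaux P r π H (H - h) s

/-- Occupancy measure `d^π_h(s,a)`. -/
noncomputable def occ {S A : Type*} [Fintype S] [Fintype A]
    (P : ℕ → S → A → S → ℝ) (d0 : S → ℝ) (π : ℕ → S → A → ℝ) :
    ℕ → S → A → ℝ
  | 0, s, a => d0 s * π 0 s a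
  | h + 1, s', a' => (∑ s, ∑ a, occ P d0 π h s a * P h s a s') * π (h + 1) s' a'

/-- The deterministic greedy policy w.r.t. the tuple `f`. -/
noncomputable def greedy {S A : Type*} [Fintype A] [Nonempty A]
    (f : ℕ → S → A → ℝ) (h : ℕ) (s : S) (a : A) : ℝ :=
  if a = argmaxA (f h s) then 1 else 0

lemma jensen_sq {ι : Type*} (s : Finset ι) (p x : ι → ℝ)
    (hp : ∀ i ∈ s, 0 ≤ p i) (hs : ∑ i ∈ s, p i = 1) :
    (∑ i ∈ s, p i * x i) ^ 2 ≤ ∑ i ∈ s, p i * x i ^ 2 := by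
  have h := Finset.sum_mul_sq_le_sq_mul_sq s (fun i => Real.sqrt (p i))
    (fun i => Real.sqrt (p i) * x i)
  have e1 : ∀ i ∈ s, Real.sqrt (p i) * (Real.sqrt (p i) * x i) = p i * x i := by
    intro i hi
    rw [← mul_assoc, Real.mul_self_sqrt (hp i hi)]
  have e2 : ∀ i ∈ s, (Real.sqrt (p i)) ^ 2 = p i := fun i hi => Real.sq_sqrt (hp i hi)
  have e3 : ∀ i ∈ s, (Real.sqrt (p i) * x i) ^ 2 = p i * x i ^ 2 := by
    intro i hi; rw [mul_pow, Real.sq_sqrt (hp i hi)]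
  rw [Finset.sum_congr rfl e1, Finset.sum_congr rfl e2, Finset.sum_congr rfl e3, hs, one_mul] at h
  exact h

lemma symm_dot (n : Type*) [Fintype n] {N : Matrix n n ℝ} (hN : N.IsHermitian) (u v : n → ℝ) :
    u ⬝ᵥ N *ᵥ v = v ⬝ᵥ N *ᵥ u := by
  rw [Matrix.dotProduct_mulVec, ← Matrix.mulVec_transpose]
  have : Nᵀ = N := by
    have := hN; rwa [Matrix.IsHermitian, Matrix.conjTranspose_eq_transpose_of_trivial] at this
  rw [this, dotProduct_comm]

lemma matrix_cs {n : Type*} [Fintype n] [DecidableEq n] {M : Matrix n n ℝ} (hM : M.PosDef)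
    (x y : n → ℝ) :
    x ⬝ᵥ y ≤ Real.sqrt (x ⬝ᵥ M⁻¹ *ᵥ x) * Real.sqrt (y ⬝ᵥ M *ᵥ y) := by
  have hMs : Mᵀ = M := by
    have := hM.1; rwa [Matrix.IsHermitian, Matrix.conjTranspose_eq_transpose_of_trivial] at this
  have hN : (M⁻¹).PosDef := hM.inv
  have ha : 0 ≤ x ⬝ᵥ M⁻¹ *ᵥ x := by simpa using hN.posSemidef.dotProduct_mulVec_nonneg x
  have hb : 0 ≤ y ⬝ᵥ M *ᵥ y := by simpa using hM.posSemidef.dotProduct_mulVec_nonneg y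
  have key : (x ⬝ᵥ y) ^ 2 ≤ (x ⬝ᵥ M⁻¹ *ᵥ x) * (y ⬝ᵥ M *ᵥ y) := by
    rcases eq_or_ne y 0 with rfl | hy
    · simp [Matrix.mulVec_zero]
    · have hbpos : 0 < y ⬝ᵥ M *ᵥ y := by simpa using hM.dotProduct_mulVec_pos hy
      set b := y ⬝ᵥ M *ᵥ y with hbdef
      set c := x ⬝ᵥ y with hcdef
      set t : ℝ := c / b with ht
      set z : n → ℝ := x - t • (M *ᵥ y) with hz
      have hzq : 0 ≤ z ⬝ᵥ M⁻¹ *ᵥ z := by simpa using hN.posSemidef.dotProduct_mulVec_nonneg z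
      have hNM : M⁻¹ *ᵥ (M *ᵥ y) = y := by
        rw [Matrix.mulVec_mulVec,
          Matrix.nonsing_inv_mul _ ((Matrix.isUnit_iff_isUnit_det _).mp hM.isUnit),
          Matrix.one_mulVec]
      have hcross : (M *ᵥ y) ⬝ᵥ M⁻¹ *ᵥ x = c := by
        rw [symm_dot n hN.1, hNM]
      have hMyy : (M *ᵥ y) ⬝ᵥ y = b := by rw [dotProduct_comm]
      have expand : z ⬝ᵥ M⁻¹ *ᵥ z = (x ⬝ᵥ M⁻¹ *ᵥ x) - 2 * t * c + t ^ 2 * b := by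
        rw [hz, Matrix.mulVec_sub, Matrix.mulVec_smul, hNM, sub_dotProduct,
          dotProduct_sub, dotProduct_sub, smul_dotProduct,
          dotProduct_smul, smul_dotProduct, dotProduct_smul,
          hcross, hMyy, ← hcdef]
        simp [smul_eq_mul]; ring
      rw [expand, ht] at hzq
      generalize hq : x ⬝ᵥ M⁻¹ *ᵥ x = q at hzq ⊢
      have hb' : b ≠ 0 := ne_of_gt hbpos
      have hzq' : 0 ≤ (q - 2 * (c / b) * c + (c / b) ^ 2 * b) * b :=
        mul_nonneg hzq hbpos.le
      have he : (q - 2 * (c / b) * c + (c / b) ^ 2 * b) * b = (q * b - c ^ 2) * 1 := by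
        field_simp
        ring
      nlinarith [hzq', he]
  calc x ⬝ᵥ y ≤ |x ⬝ᵥ y| := le_abs_self _
    _ = Real.sqrt ((x ⬝ᵥ y) ^ 2) := (Real.sqrt_sq_eq_abs _).symm
    _ ≤ Real.sqrt ((x ⬝ᵥ M⁻¹ *ᵥ x) * (y ⬝ᵥ M *ᵥ y)) := Real.sqrt_le_sqrt key
    _ = _ := Real.sqrt_mul ha _


lemma sum_cs {ι : Type*} [Fintype ι] (w q : ι → ℝ) (hw : ∀ i, 0 ≤ w i) :
    ∑ i, w i * q i ≤ Real.sqrt (∑ i, w i) * Real.sqrt (∑ i, w i * q i ^ 2) := by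
  have h := Finset.sum_mul_sq_le_sq_mul_sq Finset.univ (fun i => Real.sqrt (w i))
    (fun i => Real.sqrt (w i) * q i)
  have e1 : ∀ i ∈ Finset.univ (α := ι), Real.sqrt (w i) * (Real.sqrt (w i) * q i) = w i * q i := by
    intro i _; rw [← mul_assoc, Real.mul_self_sqrt (hw i)]
  have e2 : ∀ i ∈ Finset.univ (α := ι), (Real.sqrt (w i)) ^ 2 = w i :=
    fun i _ => Real.sq_sqrt (hw i)
  have e3 : ∀ i ∈ Finset.univ (α := ι), (Real.sqrt (w i) * q i) ^ 2 = w i * q i ^ 2 := by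
    intro i _; rw [mul_pow, Real.sq_sqrt (hw i)]
  rw [Finset.sum_congr rfl e1, Finset.sum_congr rfl e2, Finset.sum_congr rfl e3] at h
  calc ∑ i, w i * q i ≤ |∑ i, w i * q i| := le_abs_self _
    _ = Real.sqrt ((∑ i, w i * q i) ^ 2) := (Real.sqrt_sq_eq_abs _).symm
    _ ≤ Real.sqrt ((∑ i, w i) * ∑ i, w i * q i ^ 2) := Real.sqrt_le_sqrt h
    _ = _ := Real.sqrt_mul (Finset.sum_nonneg fun i _ => hw i) _

lemma sum_mulVec' {ι n : Type*} [Fintype n] (t : Finset ι) (M : ι → Matrix n n ℝ) (x : n → ℝ) :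
    (∑ i ∈ t, M i) *ᵥ x = ∑ i ∈ t, M i *ᵥ x := by
  classical
  induction t using Finset.induction_on with
  | empty => simp [Matrix.zero_mulVec]
  | insert a s hnot ih => simp [Finset.sum_insert hnot, Matrix.add_mulVec, ih]

lemma dotProduct_sum' {ι n : Type*} [Fintype n] (t : Finset ι) (x : n → ℝ) (v : ι → n → ℝ) :
    x ⬝ᵥ (∑ i ∈ t, v i) = ∑ i ∈ t, x ⬝ᵥ v i := by
  classical
  induction t using Finset.induction_on with
  | empty => simp
  | insert a s hnot ih => simp [Finset.sum_insert hnot, dotProduct_add, ih]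

lemma vecMulVec_mulVec' {n : Type*} [Fintype n] (u x : n → ℝ) :
    Matrix.vecMulVec u u *ᵥ x = (u ⬝ᵥ x) • u := by
  funext i
  simp only [Matrix.mulVec, Matrix.vecMulVec_apply, dotProduct, Pi.smul_apply,
    smul_eq_mul, Finset.sum_mul]
  refine Finset.sum_congr rfl fun j _ => by ring

lemma quad_form_sum {S A n : Type*} [Fintype S] [Fintype A] [Fintype n]
    (c : S → A → ℝ) (u : S → A → n → ℝ) (x : n → ℝ) :
    x ⬝ᵥ (∑ s, ∑ a, c s a • Matrix.vecMulVec (u s a) (u s a)) *ᵥ x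
      = ∑ s, ∑ a, c s a * (u s a ⬝ᵥ x) ^ 2 := by
  rw [sum_mulVec', dotProduct_sum']
  refine Finset.sum_congr rfl fun s _ => ?_
  rw [sum_mulVec', dotProduct_sum']
  refine Finset.sum_congr rfl fun a _ => ?_
  rw [Matrix.smul_mulVec, vecMulVec_mulVec']
  simp only [dotProduct_smul, smul_eq_mul, dotProduct_comm x (u s a)]
  ring


lemma occ_nonneg {S A : Type*} [Fintype S] [Fintype A]
    (P : ℕ → S → A → S → ℝ) (d0 : S → ℝ) (π : ℕ → S → A → ℝ) (H : ℕ)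
    (hP : ∀ h < H, ∀ s a s', 0 ≤ P h s a s') (hd0 : ∀ s, 0 ≤ d0 s)
    (hπ : ∀ h < H, ∀ s a, 0 ≤ π h s a) :
    ∀ h, h < H → ∀ s a, 0 ≤ occ P d0 π h s a := by
  intro h
  induction h with
  | zero => exact fun h0 s a => mul_nonneg (hd0 s) (hπ 0 h0 s a)
  | succ k ih =>
    intro hk s a
    show 0 ≤ (∑ s', ∑ a', occ P d0 π k s' a' * P k s' a' s) * π (k + 1) s a
    refine mul_nonneg (Finset.sum_nonneg fun s' _ => Finset.sum_nonneg fun a' _ =>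
      mul_nonneg (ih (by omega) s' a') (hP k (by omega) s' a' s)) (hπ (k + 1) hk s a)

lemma occ_sum_one {S A : Type*} [Fintype S] [Fintype A]
    (P : ℕ → S → A → S → ℝ) (d0 : S → ℝ) (π : ℕ → S → A → ℝ) (H : ℕ)
    (hPsum : ∀ h < H, ∀ s a, ∑ s', P h s a s' = 1)
    (hd0sum : ∑ s, d0 s = 1)
    (hπsum : ∀ h < H, ∀ s, ∑ a, π h s a = 1) :
    ∀ h, h < H → ∑ s, ∑ a, occ P d0 π h s a = 1 := by
  intro h
  induction h with
  | zero =>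
    intro h0
    show ∑ s, ∑ a, d0 s * π 0 s a = 1
    calc ∑ s, ∑ a, d0 s * π 0 s a = ∑ s, d0 s * ∑ a, π 0 s a := by
          refine Finset.sum_congr rfl fun s _ => (Finset.mul_sum _ _ _).symm
      _ = ∑ s, d0 s := by
          refine Finset.sum_congr rfl fun s _ => by rw [hπsum 0 h0 s, mul_one]
      _ = 1 := hd0sum
  | succ k ih =>
    intro hk
    show ∑ s, ∑ a, (∑ s', ∑ a', occ P d0 π k s' a' * P k s' a' s) * π (k + 1) s a = 1
    calc ∑ s, ∑ a, (∑ s', ∑ a', occ P d0 π k s' a' * P k s' a' s) * π (k + 1) s a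
        = ∑ s, (∑ s', ∑ a', occ P d0 π k s' a' * P k s' a' s) * ∑ a, π (k + 1) s a := by
          refine Finset.sum_congr rfl fun s _ => (Finset.mul_sum _ _ _).symm
      _ = ∑ s, ∑ s', ∑ a', occ P d0 π k s' a' * P k s' a' s := by
          refine Finset.sum_congr rfl fun s _ => by rw [hπsum (k + 1) hk s, mul_one]
      _ = ∑ s', ∑ s, ∑ a', occ P d0 π k s' a' * P k s' a' s := Finset.sum_comm
      _ = ∑ s', ∑ a', ∑ s, occ P d0 π k s' a' * P k s' a' s := by
          refine Finset.sum_congr rfl fun s' _ => Finset.sum_comm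
      _ = ∑ s', ∑ a', occ P d0 π k s' a' * ∑ s, P k s' a' s := by
          refine Finset.sum_congr rfl fun s' _ => Finset.sum_congr rfl fun a' _ =>
            (Finset.mul_sum _ _ _).symm
      _ = ∑ s', ∑ a', occ P d0 π k s' a' := by
          refine Finset.sum_congr rfl fun s' _ => Finset.sum_congr rfl fun a' _ => by
            rw [hPsum k (by omega) s' a', mul_one]
      _ = 1 := ih (by omega)

lemma range_split (H : ℕ) (hH : 1 ≤ H) (A : ℕ → ℝ) :
    ∑ h ∈ Finset.range H, A h = A 0 + ∑ h ∈ Finset.Icc 1 (H - 1), A h := by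
  have he : Finset.range H = insert 0 (Finset.Icc 1 (H - 1)) := by
    ext x
    simp only [Finset.mem_range, Finset.mem_insert, Finset.mem_Icc]
    omega
  rw [he, Finset.sum_insert (by simp)]


lemma transfer_aux
    {S A : Type*} [Fintype S] [Fintype A] [Nonempty S] [Nonempty A]
    (H : ℕ) (hH : 1 ≤ H)
    (P : ℕ → S → A → S → ℝ)
    (hPnn : ∀ h < H, ∀ s a s', 0 ≤ P h s a s')
    (hPsum : ∀ h < H, ∀ s a, ∑ s', P h s a s' = 1)
    (d0 : S → ℝ) (hd0nn : ∀ s, 0 ≤ d0 s) (hd0sum : ∑ s, d0 s = 1)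
    (dd : ℕ) (φ : ℕ → S → A → Fin dd → ℝ) (μm : ℕ → S → Fin dd → ℝ)
    (hlowrank : ∀ h < H, ∀ s a s', P h s a s' = μm h s' ⬝ᵥ φ h s a)
    (ν : ℕ → S → A → ℝ)
    (hνpos : ∀ h < H, ∀ s a, 0 < ν h s a)
    (hνinit : ∀ s, ∑ a, ν 0 s a = d0 s)
    (hνmarg : ∀ h, 1 ≤ h → h < H → ∀ s,
      ∑ a, ν h s a = ∑ sb, ∑ ab, ν (h - 1) sb ab * P (h - 1) sb ab s)
    (hpd : ∀ h < H, (∑ s, ∑ a, ν h s a • Matrix.vecMulVec (φ h s a) (φ h s a)).PosDef)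
    (α : ℝ) (hα : 0 < α)
    (π : ℕ → S → A → ℝ)
    (hπnn : ∀ h < H, ∀ s a, 0 ≤ π h s a)
    (hπsum : ∀ h < H, ∀ s, ∑ a, π h s a = 1)
    (hratio : ∀ h < H, ∀ s a, π h s a * (∑ a', ν h s a') ≤ α * ν h s a)
    (D : ℕ → S → A → ℝ) :
    ∑ h ∈ Finset.range H, ∑ s, ∑ a, occ P d0 π h s a * D h s a
      ≤ Real.sqrt α *
          (1 + ∑ h ∈ Finset.Icc 1 (H - 1), ∑ s, ∑ a,
            occ P d0 π (h - 1) s a *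
              Real.sqrt (φ (h - 1) s a ⬝ᵥ
                (∑ s', ∑ a', ν (h - 1) s' a' •
                    Matrix.vecMulVec (φ (h - 1) s' a') (φ (h - 1) s' a'))⁻¹ *ᵥ
                  φ (h - 1) s a)) *
          Real.sqrt (∑ h ∈ Finset.range H, ∑ s, ∑ a, ν h s a * D h s a ^ 2) := by
  classical
  set Ef : ℕ → ℝ := fun h => ∑ s, ∑ a, ν h s a * D h s a ^ 2 with hEf
  set Cc : ℕ → ℝ := fun h => ∑ s, ∑ a,
      occ P d0 π (h - 1) s a *
        Real.sqrt (φ (h - 1) s a ⬝ᵥ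
          (∑ s', ∑ a', ν (h - 1) s' a' •
              Matrix.vecMulVec (φ (h - 1) s' a') (φ (h - 1) s' a'))⁻¹ *ᵥ
            φ (h - 1) s a) with hCc
  set T : ℝ := ∑ h ∈ Finset.range H, Ef h with hT
  have hEnn : ∀ h, h < H → 0 ≤ Ef h := fun h hh =>
    Finset.sum_nonneg fun s _ => Finset.sum_nonneg fun a _ =>
      mul_nonneg (hνpos h hh s a).le (sq_nonneg _)
  have hTnn : 0 ≤ T :=
    Finset.sum_nonneg fun h hh => hEnn h (Finset.mem_range.mp hh)
  have hsqT : ∀ h, h < H → Real.sqrt (Ef h) ≤ Real.sqrt T := by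
    intro h hh
    refine Real.sqrt_le_sqrt ?_
    rw [hT]
    exact Finset.single_le_sum (fun i hi => hEnn i (Finset.mem_range.mp hi))
      (Finset.mem_range.mpr hh)
  have honn := occ_nonneg P d0 π H hPnn hd0nn hπnn
  have hosum := occ_sum_one P d0 π H hPsum hd0sum hπsum
  have h0H : 0 < H := hH
  -- step 0
  have step0 : ∑ s, ∑ a, occ P d0 π 0 s a * D 0 s a
      ≤ Real.sqrt α * Real.sqrt (Ef 0) := by
    have hocc0 : ∀ s a, occ P d0 π 0 s a ≤ α * ν 0 s a := by
      intro s a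
      have : occ P d0 π 0 s a = π 0 s a * (∑ a', ν 0 s a') := by
        show d0 s * π 0 s a = _
        rw [hνinit s]; ring
      rw [this]
      exact hratio 0 h0H s a
    calc ∑ s, ∑ a, occ P d0 π 0 s a * D 0 s a
        = ∑ p : S × A, occ P d0 π 0 p.1 p.2 * D 0 p.1 p.2 := by
          rw [Fintype.sum_prod_type]
      _ ≤ Real.sqrt (∑ p : S × A, occ P d0 π 0 p.1 p.2) *
            Real.sqrt (∑ p : S × A, occ P d0 π 0 p.1 p.2 * D 0 p.1 p.2 ^ 2) :=
          sum_cs _ _ (fun p => honn 0 h0H p.1 p.2)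
      _ ≤ Real.sqrt 1 * Real.sqrt (α * Ef 0) := by
          refine mul_le_mul (Real.sqrt_le_sqrt ?_) (Real.sqrt_le_sqrt ?_)
            (Real.sqrt_nonneg _) (by norm_num)
          · rw [Fintype.sum_prod_type]
            exact le_of_eq (hosum 0 h0H)
          · calc ∑ p : S × A, occ P d0 π 0 p.1 p.2 * D 0 p.1 p.2 ^ 2
                ≤ ∑ p : S × A, α * ν 0 p.1 p.2 * D 0 p.1 p.2 ^ 2 :=
                  Finset.sum_le_sum fun p _ =>
                    mul_le_mul_of_nonneg_right (hocc0 p.1 p.2) (sq_nonneg _)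
              _ = α * Ef 0 := by
                  rw [hEf]
                  simp only [Fintype.sum_prod_type, Finset.mul_sum]
                  exact Finset.sum_congr rfl fun s _ => Finset.sum_congr rfl fun a _ => by ring
      _ = Real.sqrt α * Real.sqrt (Ef 0) := by
          rw [Real.sqrt_one, one_mul, Real.sqrt_mul hα.le]
  -- step h ≥ 1
  have steph : ∀ h ∈ Finset.Icc 1 (H - 1),
      ∑ s, ∑ a, occ P d0 π h s a * D h s a
        ≤ Cc h * (Real.sqrt α * Real.sqrt (Ef h)) := by
    intro h hmem
    rw [Finset.mem_Icc] at hmem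
    obtain ⟨k, rfl⟩ : ∃ k, h = k + 1 := ⟨h - 1, by omega⟩
    have hkH : k < H := by omega
    have hk1H : k + 1 < H := by omega
    set g : S → ℝ := fun s => ∑ a, π (k + 1) s a * D (k + 1) s a with hg
    set w : Fin dd → ℝ := fun i => ∑ s, μm k s i * g s with hw
    set Mk : Matrix (Fin dd) (Fin dd) ℝ :=
      ∑ s', ∑ a', ν k s' a' • Matrix.vecMulVec (φ k s' a') (φ k s' a') with hMk
    have hMkpd : Mk.PosDef := hpd k hkH
    have hdot' : ∀ sb ab, φ k sb ab ⬝ᵥ w = ∑ s, (μm k s ⬝ᵥ φ k sb ab) * g s := by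
      intro sb ab
      calc φ k sb ab ⬝ᵥ w = ∑ i, φ k sb ab i * ∑ s, μm k s i * g s := rfl
        _ = ∑ i, ∑ s, φ k sb ab i * (μm k s i * g s) := by
            refine Finset.sum_congr rfl fun i _ => Finset.mul_sum _ _ _
        _ = ∑ s, ∑ i, φ k sb ab i * (μm k s i * g s) := Finset.sum_comm
        _ = ∑ s, (∑ i, μm k s i * φ k sb ab i) * g s := by
            refine Finset.sum_congr rfl fun s _ => ?_
            rw [Finset.sum_mul]
            exact Finset.sum_congr rfl fun i _ => by ring
        _ = ∑ s, (μm k s ⬝ᵥ φ k sb ab) * g s := rfl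
    have hdot : ∀ sb ab, φ k sb ab ⬝ᵥ w = ∑ s, P k sb ab s * g s := by
      intro sb ab
      rw [hdot' sb ab]
      exact Finset.sum_congr rfl fun s _ => by rw [hlowrank k hkH sb ab s]
    have hLHS : ∑ s, ∑ a, occ P d0 π (k + 1) s a * D (k + 1) s a
        = ∑ sb, ∑ ab, occ P d0 π k sb ab * (φ k sb ab ⬝ᵥ w) := by
      have hocc1 : ∀ s a, occ P d0 π (k + 1) s a
          = (∑ sb, ∑ ab, occ P d0 π k sb ab * P k sb ab s) * π (k + 1) s a :=
        fun s a => rfl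
      calc ∑ s, ∑ a, occ P d0 π (k + 1) s a * D (k + 1) s a
          = ∑ s, (∑ sb, ∑ ab, occ P d0 π k sb ab * P k sb ab s) * g s := by
            refine Finset.sum_congr rfl fun s _ => ?_
            rw [hg]
            rw [Finset.mul_sum]
            refine Finset.sum_congr rfl fun a _ => by rw [hocc1]; ring
        _ = ∑ s, ∑ sb, ∑ ab, occ P d0 π k sb ab * P k sb ab s * g s := by
            refine Finset.sum_congr rfl fun s _ => ?_
            rw [Finset.sum_mul]
            exact Finset.sum_congr rfl fun sb _ => by rw [Finset.sum_mul]
        _ = ∑ sb, ∑ ab, ∑ s, occ P d0 π k sb ab * P k sb ab s * g s := by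
            rw [Finset.sum_comm]
            exact Finset.sum_congr rfl fun sb _ => Finset.sum_comm
        _ = ∑ sb, ∑ ab, occ P d0 π k sb ab * ∑ s, P k sb ab s * g s := by
            refine Finset.sum_congr rfl fun sb _ => Finset.sum_congr rfl fun ab _ => ?_
            rw [Finset.mul_sum]
            exact Finset.sum_congr rfl fun s _ => by ring
        _ = ∑ sb, ∑ ab, occ P d0 π k sb ab * (φ k sb ab ⬝ᵥ w) := by
            refine Finset.sum_congr rfl fun sb _ => Finset.sum_congr rfl fun ab _ => ?_
            rw [hdot]
    have hquad : w ⬝ᵥ Mk *ᵥ w ≤ α * Ef (k + 1) := by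
      rw [hMk, quad_form_sum]
      calc ∑ sb, ∑ ab, ν k sb ab * (φ k sb ab ⬝ᵥ w) ^ 2
          ≤ ∑ sb, ∑ ab, ν k sb ab * ∑ s, P k sb ab s * g s ^ 2 := by
            refine Finset.sum_le_sum fun sb _ => Finset.sum_le_sum fun ab _ => ?_
            rw [hdot sb ab]
            exact mul_le_mul_of_nonneg_left
              (jensen_sq Finset.univ (P k sb ab) g (fun s _ => hPnn k hkH sb ab s)
                (hPsum k hkH sb ab)) (hνpos k hkH sb ab).le
        _ = ∑ s, (∑ sb, ∑ ab, ν k sb ab * P k sb ab s) * g s ^ 2 := by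
            calc ∑ sb, ∑ ab, ν k sb ab * ∑ s, P k sb ab s * g s ^ 2
                = ∑ sb, ∑ ab, ∑ s, ν k sb ab * P k sb ab s * g s ^ 2 := by
                  refine Finset.sum_congr rfl fun sb _ => Finset.sum_congr rfl fun ab _ => ?_
                  rw [Finset.mul_sum]
                  exact Finset.sum_congr rfl fun s _ => by ring
              _ = ∑ sb, ∑ s, ∑ ab, ν k sb ab * P k sb ab s * g s ^ 2 :=
                  Finset.sum_congr rfl fun sb _ => Finset.sum_comm
              _ = ∑ s, ∑ sb, ∑ ab, ν k sb ab * P k sb ab s * g s ^ 2 := Finset.sum_comm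
              _ = ∑ s, (∑ sb, ∑ ab, ν k sb ab * P k sb ab s) * g s ^ 2 := by
                  refine Finset.sum_congr rfl fun s _ => ?_
                  rw [Finset.sum_mul]
                  refine Finset.sum_congr rfl fun sb _ => ?_
                  rw [Finset.sum_mul]
        _ = ∑ s, (∑ a, ν (k + 1) s a) * g s ^ 2 := by
            refine Finset.sum_congr rfl fun s _ => ?_
            have := hνmarg (k + 1) (by omega) hk1H s
            simp only [Nat.add_sub_cancel] at this
            rw [this]
        _ ≤ ∑ s, (∑ a, ν (k + 1) s a) * ∑ a, π (k + 1) s a * D (k + 1) s a ^ 2 := by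
            refine Finset.sum_le_sum fun s _ => ?_
            refine mul_le_mul_of_nonneg_left ?_
              (Finset.sum_nonneg fun a _ => (hνpos (k + 1) hk1H s a).le)
            exact jensen_sq Finset.univ (π (k + 1) s) (D (k + 1) s)
              (fun a _ => hπnn (k + 1) hk1H s a) (hπsum (k + 1) hk1H s)
        _ = ∑ s, ∑ a, π (k + 1) s a * (∑ a', ν (k + 1) s a') * D (k + 1) s a ^ 2 := by
            refine Finset.sum_congr rfl fun s _ => ?_
            rw [Finset.mul_sum]
            exact Finset.sum_congr rfl fun a _ => by ring
        _ ≤ ∑ s, ∑ a, α * ν (k + 1) s a * D (k + 1) s a ^ 2 := by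
            refine Finset.sum_le_sum fun s _ => Finset.sum_le_sum fun a _ => ?_
            exact mul_le_mul_of_nonneg_right (hratio (k + 1) hk1H s a) (sq_nonneg _)
        _ = α * Ef (k + 1) := by
            rw [hEf]
            simp only [Finset.mul_sum]
            exact Finset.sum_congr rfl fun s _ => Finset.sum_congr rfl fun a _ => by ring
    have hwnn : 0 ≤ w ⬝ᵥ Mk *ᵥ w := by
      simpa using hMkpd.posSemidef.dotProduct_mulVec_nonneg w
    have hsqw : Real.sqrt (w ⬝ᵥ Mk *ᵥ w) ≤ Real.sqrt α * Real.sqrt (Ef (k + 1)) := by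
      rw [← Real.sqrt_mul hα.le]
      exact Real.sqrt_le_sqrt hquad
    have hCnn0 : 0 ≤ ∑ sb, ∑ ab, occ P d0 π k sb ab *
        Real.sqrt (φ k sb ab ⬝ᵥ Mk⁻¹ *ᵥ φ k sb ab) :=
      Finset.sum_nonneg fun sb _ => Finset.sum_nonneg fun ab _ =>
        mul_nonneg (honn k hkH sb ab) (Real.sqrt_nonneg _)
    have hCeq : Cc (k + 1) = ∑ sb, ∑ ab, occ P d0 π k sb ab *
        Real.sqrt (φ k sb ab ⬝ᵥ Mk⁻¹ *ᵥ φ k sb ab) := by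
      rw [hCc, hMk]
      simp only [Nat.add_sub_cancel]
    calc ∑ s, ∑ a, occ P d0 π (k + 1) s a * D (k + 1) s a
        = ∑ sb, ∑ ab, occ P d0 π k sb ab * (φ k sb ab ⬝ᵥ w) := hLHS
      _ ≤ ∑ sb, ∑ ab, occ P d0 π k sb ab *
            (Real.sqrt (φ k sb ab ⬝ᵥ Mk⁻¹ *ᵥ φ k sb ab) * Real.sqrt (w ⬝ᵥ Mk *ᵥ w)) := by
          refine Finset.sum_le_sum fun sb _ => Finset.sum_le_sum fun ab _ => ?_
          exact mul_le_mul_of_nonneg_left (matrix_cs hMkpd (φ k sb ab) w) (honn k hkH sb ab)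
      _ = (∑ sb, ∑ ab, occ P d0 π k sb ab *
            Real.sqrt (φ k sb ab ⬝ᵥ Mk⁻¹ *ᵥ φ k sb ab)) * Real.sqrt (w ⬝ᵥ Mk *ᵥ w) := by
          rw [Finset.sum_mul]
          refine Finset.sum_congr rfl fun sb _ => ?_
          rw [Finset.sum_mul]
          exact Finset.sum_congr rfl fun ab _ => by ring
      _ ≤ (∑ sb, ∑ ab, occ P d0 π k sb ab *
            Real.sqrt (φ k sb ab ⬝ᵥ Mk⁻¹ *ᵥ φ k sb ab)) *
            (Real.sqrt α * Real.sqrt (Ef (k + 1))) :=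
          mul_le_mul_of_nonneg_left hsqw hCnn0
      _ = Cc (k + 1) * (Real.sqrt α * Real.sqrt (Ef (k + 1))) := by rw [hCeq]
  -- assembly
  have hCnn : ∀ h ∈ Finset.Icc 1 (H - 1), 0 ≤ Cc h := by
    intro h hmem
    rw [Finset.mem_Icc] at hmem
    have hh1 : h - 1 < H := by omega
    rw [hCc]
    exact Finset.sum_nonneg fun s _ => Finset.sum_nonneg fun a _ =>
      mul_nonneg (honn (h - 1) hh1 s a) (Real.sqrt_nonneg _)
  rw [range_split H hH (fun h => ∑ s, ∑ a, occ P d0 π h s a * D h s a)]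
  calc (∑ s, ∑ a, occ P d0 π 0 s a * D 0 s a)
        + ∑ h ∈ Finset.Icc 1 (H - 1), ∑ s, ∑ a, occ P d0 π h s a * D h s a
      ≤ Real.sqrt α * Real.sqrt (Ef 0)
        + ∑ h ∈ Finset.Icc 1 (H - 1), Cc h * (Real.sqrt α * Real.sqrt (Ef h)) :=
        add_le_add step0 (Finset.sum_le_sum steph)
    _ ≤ Real.sqrt α * Real.sqrt T
        + ∑ h ∈ Finset.Icc 1 (H - 1), Cc h * (Real.sqrt α * Real.sqrt T) := by
        refine add_le_add (mul_le_mul_of_nonneg_left (hsqT 0 h0H) (Real.sqrt_nonneg _))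
          (Finset.sum_le_sum fun h hmem => ?_)
        have hhH : h < H := by
          rw [Finset.mem_Icc] at hmem; omega
        exact mul_le_mul_of_nonneg_left
          (mul_le_mul_of_nonneg_left (hsqT h hhH) (Real.sqrt_nonneg _)) (hCnn h hmem)
    _ = Real.sqrt α * (1 + ∑ h ∈ Finset.Icc 1 (H - 1), Cc h) * Real.sqrt T := by
        rw [Finset.sum_mul (Finset.Icc 1 (H - 1)) Cc (Real.sqrt α * Real.sqrt T) |>.symm]
        ring

/-- **Transfer coefficient bound in low-rank MDPs.** -/
theorem low_rank_transfer_coefficient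
    {S A : Type*} [Fintype S] [Fintype A] [Nonempty S] [Nonempty A]
    (H : ℕ) (hH : 1 ≤ H)
    (P : ℕ → S → A → S → ℝ)
    (hPnn : ∀ h < H, ∀ s a s', 0 ≤ P h s a s')
    (hPsum : ∀ h < H, ∀ s a, ∑ s', P h s a s' = 1)
    (r : ℕ → S → A → ℝ)
    (d0 : S → ℝ) (hd0nn : ∀ s, 0 ≤ d0 s) (hd0sum : ∑ s, d0 s = 1)
    (dd : ℕ) (φ : ℕ → S → A → Fin dd → ℝ) (μm : ℕ → S → Fin dd → ℝ)
    (hlowrank : ∀ h < H, ∀ s a s', P h s a s' = μm h s' ⬝ᵥ φ h s a)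
    (ν : ℕ → S → A → ℝ)
    (hνpos : ∀ h < H, ∀ s a, 0 < ν h s a)
    (hνsum : ∀ h < H, ∑ s, ∑ a, ν h s a = 1)
    (hνinit : ∀ s, ∑ a, ν 0 s a = d0 s)
    (hνmarg : ∀ h, 1 ≤ h → h < H → ∀ s,
      ∑ a, ν h s a = ∑ sb, ∑ ab, ν (h - 1) sb ab * P (h - 1) sb ab s)
    (hpd : ∀ h < H, (∑ s, ∑ a, ν h s a • Matrix.vecMulVec (φ h s a) (φ h s a)).PosDef)
    (α : ℝ) (hα : 0 < α)
    (π : ℕ → S → A → ℝ)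
    (hπnn : ∀ h < H, ∀ s a, 0 ≤ π h s a)
    (hπsum : ∀ h < H, ∀ s, ∑ a, π h s a = 1)
    (hratio : ∀ h < H, ∀ s a, π h s a * (∑ a', ν h s a') ≤ α * ν h s a)
    (f : ℕ → S → A → ℝ) (hfH : ∀ s a, f H s a = 0)
    (hpos : 0 < ∑ h ∈ Finset.range H, ∑ s, ∑ a,
      ν h s a * (bellman P r h (f (h + 1)) s a - f h s a) ^ 2) :
    ∑ h ∈ Finset.range H, ∑ s, ∑ a,
        occ P d0 π h s a * (bellman P r h (f (h + 1)) s a - f h s a)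
      ≤ Real.sqrt α *
          (1 + ∑ h ∈ Finset.Icc 1 (H - 1), ∑ s, ∑ a,
            occ P d0 π (h - 1) s a *
              Real.sqrt (φ (h - 1) s a ⬝ᵥ
                (∑ s', ∑ a', ν (h - 1) s' a' •
                    Matrix.vecMulVec (φ (h - 1) s' a') (φ (h - 1) s' a'))⁻¹ *ᵥ
                  φ (h - 1) s a)) *
          Real.sqrt (∑ h ∈ Finset.range H, ∑ s, ∑ a,
            ν h s a * (bellman P r h (f (h + 1)) s a - f h s a) ^ 2) := by
  exact transfer_aux H hH P hPnn hPsum d0 hd0nn hd0sum dd φ μm hlowrank ν hνpos hνinit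
    hνmarg hpd α hα π hπnn hπsum hratio
    (fun h s a => bellman P r h (f (h + 1)) s a - f h s a)
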